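/- Let n be an integer and c a real constant. Define quaternion-valued functions A_τ(r,Θ,φ) := (n/2)(c − 1/r)·q_n(Θ,φ), A_r := 0, A_Θ(Θ,φ) := (1/2)(sin(nφ)·i − cos(nφ)·j), A_φ(Θ,φ) := (n/2)cos Θ·q_n(Θ,φ) − (n/2)·k, where q_n(Θ,φ) := sin Θ cos(nφ)·i + sin Θ sin(nφ)·j + cos Θ·k. Then for all r ≠ 0 and all Θ, φ, the curvature components F_{μν} = ∂_μ A_ν − ∂_ν A_μ + A_μ A_ν − A_ν A_μ satisfy: F_{τr} = −(n/(2r²))·q_n(Θ,φ); F_{ΘΦ} = −(n/2) sin Θ·q_n(Θ,φ); F_{τΘ} = 0; F_{τφ} = 0; F_{rΘ} = 0; F_{rφ} = 0. (That is, the curvature of the self-dual Charap–Duff connection Ã_n equals n·ω·q_n, where ω = −(1/2)(r^{-2} dτ∧dr + sin Θ dΘ∧dφ).) -/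

import Mathlib

open scoped Quaternion

/-- The imaginary unit `i` of the real quaternions. -/
def qi : ℍ[ℝ] := ⟨0, 1, 0, 0⟩

/-- The imaginary unit `j` of the real quaternions. -/
def qj : ℍ[ℝ] := ⟨0, 0, 1, 0⟩

/-- The imaginary unit `k` of the real quaternions. -/
def qk : ℍ[ℝ] := ⟨0, 0, 0, 1⟩

/-- The Charap–Duff field `q_n(Θ,φ) = sin Θ cos(nφ)·i + sin Θ sin(nφ)·j + cos Θ·k`. -/
noncomputable def charapDuffQ (n : ℤ) (Θ φ : ℝ) : ℍ[ℝ] :=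
  (Real.sin Θ * Real.cos (n * φ)) • qi + (Real.sin Θ * Real.sin (n * φ)) • qj
    + Real.cos Θ • qk

/-- The `dτ`-component `A_τ = (n/2)(c − 1/r)·q_n` of the Charap–Duff connection. -/
noncomputable def Atau (n : ℤ) (c r Θ φ : ℝ) : ℍ[ℝ] :=
  ((n : ℝ) / 2 * (c - 1 / r)) • charapDuffQ n Θ φ

/-- The `dr`-component `A_r = 0` of the Charap–Duff connection. -/
noncomputable def Ar : ℍ[ℝ] := 0

/-- The `dΘ`-component `A_Θ = (1/2)(sin(nφ)·i − cos(nφ)·j)` of the Charap–Duff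
connection. -/
noncomputable def Atheta (n : ℤ) (φ : ℝ) : ℍ[ℝ] :=
  (2⁻¹ * Real.sin (n * φ)) • qi - (2⁻¹ * Real.cos (n * φ)) • qj

/-- The `dφ`-component `A_φ = (n/2)cos Θ·q_n − (n/2)·k` of the Charap–Duff connection. -/
noncomputable def Aphi (n : ℤ) (Θ φ : ℝ) : ℍ[ℝ] :=
  ((n : ℝ) / 2 * Real.cos Θ) • charapDuffQ n Θ φ - ((n : ℝ) / 2) • qk

/-!
The field `q_n` is covariantly constant along the sphere: `∂_Θ q_n + [A_Θ, q_n] = 0` and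
`∂_φ q_n + [A_φ, q_n] = 0`. Since `A_τ = f(r) q_n` is static, this kills `F_{τΘ}` and `F_{τφ}`,
while `F_{τr} = -f'(r) q_n`. Nothing depends on `τ` and only `A_τ` depends on `r`, so
`F_{rΘ} = F_{rφ} = 0`, and `F_{Θφ}` is a direct computation in which `|q_n| = 1` enters.
-/

open Real

section CovariantDerivative

variable {A : Type*} [NormedRing A] [NormedAlgebra ℝ A]

noncomputable def covDeriv (B : A) (q : ℝ → A) (x : ℝ) : A :=
  deriv q x + ⁅B, q x⁆

theorem curvature_smul_eq_zero_of_covDeriv_eq_zero {B : A} {q : ℝ → A} {x : ℝ} (f : ℝ)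
    (h : covDeriv B q x = 0) (y : ℝ) :
    deriv (fun _ : ℝ => B) y - deriv (fun t => f • q t) x + ⁅f • q x, B⁆ = 0 := by
  rw [covDeriv, Ring.lie_def] at h
  rw [deriv_const, deriv_fun_const_smul_field, Ring.lie_def, smul_mul_assoc, mul_smul_comm]
  linear_combination (norm := module) -f • h

end CovariantDerivative

@[simp] lemma qi_re : qi.re = 0 := rfl
@[simp] lemma qi_imI : qi.imI = 1 := rfl
@[simp] lemma qi_imJ : qi.imJ = 0 := rfl
@[simp] lemma qi_imK : qi.imK = 0 := rfl
@[simp] lemma qj_re : qj.re = 0 := rfl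
@[simp] lemma qj_imI : qj.imI = 0 := rfl
@[simp] lemma qj_imJ : qj.imJ = 1 := rfl
@[simp] lemma qj_imK : qj.imK = 0 := rfl
@[simp] lemma qk_re : qk.re = 0 := rfl
@[simp] lemma qk_imI : qk.imI = 0 := rfl
@[simp] lemma qk_imJ : qk.imJ = 0 := rfl
@[simp] lemma qk_imK : qk.imK = 1 := rfl

lemma hasDerivAt_charapDuffQ_theta (n : ℤ) (Θ φ : ℝ) :
    HasDerivAt (fun t => charapDuffQ n t φ)
      ((cos Θ * cos (n * φ)) • qi + (cos Θ * sin (n * φ)) • qj - sin Θ • qk) Θ := by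
  unfold charapDuffQ
  refine ((((hasDerivAt_sin Θ).mul_const _).smul_const qi).add
    (((hasDerivAt_sin Θ).mul_const _).smul_const qj) |>.add
    ((hasDerivAt_cos Θ).smul_const qk)).congr_deriv ?_
  module

lemma hasDerivAt_charapDuffQ_phi (n : ℤ) (Θ φ : ℝ) :
    HasDerivAt (fun t => charapDuffQ n Θ t)
      ((-(n * sin Θ * sin (n * φ))) • qi + (n * sin Θ * cos (n * φ)) • qj) φ := by
  have hn := hasDerivAt_const_mul (x := φ) (n : ℝ)
  unfold charapDuffQ
  refine ((((hasDerivAt_cos _).comp φ hn).const_mul (sin Θ)).smul_const qi).add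
    ((((hasDerivAt_sin _).comp φ hn).const_mul (sin Θ)).smul_const qj) |>.add_const
    (cos Θ • qk) |>.congr_deriv ?_
  module

lemma hasDerivAt_Atheta (n : ℤ) (φ : ℝ) :
    HasDerivAt (fun t => Atheta n t)
      ((2⁻¹ * n * cos (n * φ)) • qi + (2⁻¹ * n * sin (n * φ)) • qj) φ := by
  have hn := hasDerivAt_const_mul (x := φ) (n : ℝ)
  unfold Atheta
  refine ((((hasDerivAt_sin _).comp φ hn).const_mul 2⁻¹).smul_const qi).sub
    ((((hasDerivAt_cos _).comp φ hn).const_mul 2⁻¹).smul_const qj) |>.congr_deriv ?_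
  module

lemma hasDerivAt_Aphi (n : ℤ) (Θ φ : ℝ) :
    HasDerivAt (fun t => Aphi n t φ)
      ((n / 2 * cos Θ) • ((cos Θ * cos (n * φ)) • qi + (cos Θ * sin (n * φ)) • qj - sin Θ • qk)
        - (n / 2 * sin Θ) • charapDuffQ n Θ φ) Θ := by
  unfold Aphi
  refine (((hasDerivAt_cos Θ).const_mul ((n : ℝ) / 2)).smul
    (hasDerivAt_charapDuffQ_theta n Θ φ)).sub_const ((n / 2 : ℝ) • qk) |>.congr_deriv ?_
  module

lemma hasDerivAt_Atau_r (n : ℤ) (c : ℝ) {r : ℝ} (hr : r ≠ 0) (Θ φ : ℝ) :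
    HasDerivAt (fun s => Atau n c s Θ φ) ((n / (2 * r ^ 2)) • charapDuffQ n Θ φ) r := by
  unfold Atau
  simp only [one_div]
  refine (((hasDerivAt_inv hr).const_sub c).const_mul ((n : ℝ) / 2)).smul_const
    (charapDuffQ n Θ φ) |>.congr_deriv ?_
  congr 1
  field_simp

theorem covDeriv_charapDuffQ_theta (n : ℤ) (Θ φ : ℝ) :
    covDeriv (Atheta n φ) (fun t => charapDuffQ n t φ) Θ = 0 := by
  rw [covDeriv, (hasDerivAt_charapDuffQ_theta n Θ φ).deriv, Ring.lie_def]
  have hq := sin_sq_add_cos_sq (n * φ)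
  ext <;> simp [Atheta, charapDuffQ] <;> [ring; ring; ring; linear_combination sin Θ * hq]

theorem covDeriv_charapDuffQ_phi (n : ℤ) (Θ φ : ℝ) :
    covDeriv (Aphi n Θ φ) (fun t => charapDuffQ n Θ t) φ = 0 := by
  rw [covDeriv, (hasDerivAt_charapDuffQ_phi n Θ φ).deriv, Ring.lie_def]
  ext <;> simp [Aphi, charapDuffQ] <;> ring

theorem charapDuff_curvature_theta_phi (n : ℤ) (Θ φ : ℝ) :
    deriv (fun t => Aphi n t φ) Θ - deriv (fun t => Atheta n t) φ + ⁅Atheta n φ, Aphi n Θ φ⁆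
      = (-(n / 2) * sin Θ) • charapDuffQ n Θ φ := by
  rw [(hasDerivAt_Aphi n Θ φ).deriv, (hasDerivAt_Atheta n φ).deriv, Ring.lie_def]
  have hq := sin_sq_add_cos_sq (n * φ)
  ext <;> simp [Aphi, Atheta, charapDuffQ] <;>
    [ring; ring; ring; linear_combination n / 2 * cos Θ * sin Θ * hq]

/-- The curvature `F_{μν} = ∂_μ A_ν − ∂_ν A_μ + A_μ A_ν − A_ν A_μ` of the self-dual
Charap–Duff connection `Ã_n` equals `n·ω·q_n` where
`ω = −(1/2)(r^{-2} dτ∧dr + sin Θ dΘ∧dφ)`: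
`F_{τr} = −(n/(2r²))·q_n`, `F_{ΘΦ} = −(n/2) sin Θ·q_n`, and
`F_{τΘ} = F_{τφ} = F_{rΘ} = F_{rφ} = 0`. -/
theorem charap_duff_curvature (n : ℤ) (c : ℝ) (r : ℝ) (hr : r ≠ 0) (τ Θ φ : ℝ) :
    (deriv (fun _ : ℝ => Ar) τ - deriv (fun s : ℝ => Atau n c s Θ φ) r
        + Atau n c r Θ φ * Ar - Ar * Atau n c r Θ φ
      = (-((n : ℝ) / (2 * r ^ 2))) • charapDuffQ n Θ φ) ∧
    (deriv (fun t : ℝ => Aphi n t φ) Θ - deriv (fun t : ℝ => Atheta n t) φ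
        + Atheta n φ * Aphi n Θ φ - Aphi n Θ φ * Atheta n φ
      = (-((n : ℝ) / 2) * Real.sin Θ) • charapDuffQ n Θ φ) ∧
    (deriv (fun _ : ℝ => Atheta n φ) τ - deriv (fun t : ℝ => Atau n c r t φ) Θ
        + Atau n c r Θ φ * Atheta n φ - Atheta n φ * Atau n c r Θ φ = 0) ∧
    (deriv (fun _ : ℝ => Aphi n Θ φ) τ - deriv (fun t : ℝ => Atau n c r Θ t) φ
        + Atau n c r Θ φ * Aphi n Θ φ - Aphi n Θ φ * Atau n c r Θ φ = 0) ∧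
    (deriv (fun _ : ℝ => Atheta n φ) r - deriv (fun _ : ℝ => Ar) Θ
        + Ar * Atheta n φ - Atheta n φ * Ar = 0) ∧
    (deriv (fun _ : ℝ => Aphi n Θ φ) r - deriv (fun _ : ℝ => Ar) φ
        + Ar * Aphi n Θ φ - Aphi n Θ φ * Ar = 0) := by
  refine ⟨?_, ?_, ?_, ?_, ?_, ?_⟩
  · rw [(hasDerivAt_Atau_r n c hr Θ φ).deriv]
    simp [Ar]
  · rw [add_sub_assoc, ← Ring.lie_def]
    exact charapDuff_curvature_theta_phi n Θ φ
  · rw [add_sub_assoc, ← Ring.lie_def]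
    exact curvature_smul_eq_zero_of_covDeriv_eq_zero _ (covDeriv_charapDuffQ_theta n Θ φ) τ
  · rw [add_sub_assoc, ← Ring.lie_def]
    exact curvature_smul_eq_zero_of_covDeriv_eq_zero _ (covDeriv_charapDuffQ_phi n Θ φ) τ
  · simp [Ar]
  · simp [Ar]
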